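/- For all N ≥ 0, the sum over j ≥ 0 of q^{j^2} times the Gaussian binomial coefficient [N-j choose j]_q equals the sum over all integers λ of (-1)^λ q^{λ(5λ+1)/2} times [N choose ⌊(N-5λ)/2⌋]_q. -/

import Mathlib

open Complex

noncomputable def qp (q x : ℂ) (n : ℕ) : ℂ := ∏ i ∈ Finset.range n, (1 - q ^ i * x)

noncomputable def qpi (q x : ℂ) : ℂ := ∏' i : ℕ, (1 - q ^ i * x)

noncomputable def jj (q z : ℂ) : ℂ := qpi q z * qpi q (q / z) * qpi q q

noncomputable def mAL (x q z : ℂ) : ℂ :=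
  (jj q z)⁻¹ * ∑' r : ℤ, (-1 : ℂ) ^ r * q ^ (r * (r - 1) / 2) * z ^ r / (1 - q ^ (r - 1) * x * z)

noncomputable def gUniv (x q : ℂ) : ℂ :=
  x⁻¹ * (-1 + ∑' n : ℕ, q ^ (n ^ 2) / (qp q x (n + 1) * qp q (q / x) n))

noncomputable def qpz (q x : ℂ) (n : ℤ) : ℂ := qpi q x / qpi q (x * q ^ n)

noncomputable def gauss (q : ℂ) (n : ℕ) (m : ℤ) : ℂ :=
  if 0 ≤ m ∧ m ≤ (n : ℤ) then qp q q n / (qp q q m.toNat * qp q q (n - m.toNat)) else 0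

/-! Both sides, as functions of `N`, satisfy `D (N + 2) = D (N + 1) + q ^ (N + 1) * D N` with
`D 0 = D 1 = 1`. On the left this is the q-Pascal rule applied termwise, followed by the shift
`j ↦ j + 1`. On the right, applying the two q-Pascal rules according to the parity of `N - 5l`
shows that each term satisfies the recurrence up to a difference `c l - c (l + 1)`, which
telescopes away in the sum over `ℤ`. -/

variable {q : ℂ}

lemma qp_succ (q x : ℂ) (n : ℕ) : qp q x (n + 1) = qp q x n * (1 - q ^ n * x) :=
  Finset.prod_range_succ _ _

lemma gauss_eq_zero {n : ℕ} {m : ℤ} (h : m < 0 ∨ (n : ℤ) < m) : gauss q n m = 0 := by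
  rw [gauss, if_neg (by omega)]

lemma gauss_add (a b : ℕ) : gauss q (a + b) a = qp q q (a + b) / (qp q q a * qp q q b) := by
  simp [gauss]

lemma gauss_symm (n : ℕ) (m : ℤ) : gauss q n (n - m) = gauss q n m := by
  unfold gauss
  by_cases h : 0 ≤ m ∧ m ≤ n
  · rw [if_pos h, if_pos (by omega), show ((n : ℤ) - m).toNat = n - m.toNat by omega,
      Nat.sub_sub_self (by omega), mul_comm]
  · rw [if_neg h, if_neg (by omega)]

section
variable (hqp : ∀ k : ℕ, qp q q k ≠ 0)
include hqp

lemma one_sub_pow_mul_self_ne_zero (k : ℕ) : 1 - q ^ k * q ≠ 0 :=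
  right_ne_zero_of_mul (qp_succ q q k ▸ hqp (k + 1))

lemma gauss_zero_right (n : ℕ) : gauss q n 0 = 1 := by
  have h := gauss_add (q := q) 0 n
  rwa [zero_add, Nat.cast_zero, show qp q q 0 = 1 from Finset.prod_range_zero _, one_mul,
    div_self (hqp n)] at h

lemma gauss_self (n : ℕ) : gauss q n n = 1 := by
  simpa using (gauss_symm (q := q) n 0).trans (gauss_zero_right hqp n)

lemma gauss_succ (n : ℕ) (m : ℤ) :
    gauss q (n + 1) m = gauss q n m + q ^ ((n : ℤ) + 1 - m) * gauss q n (m - 1) := by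
  rcases lt_trichotomy m 0 with hm | rfl | hm
  · simp [gauss_eq_zero (.inl hm), gauss_eq_zero (.inl (show m - 1 < 0 by omega))]
  · simp [gauss_zero_right hqp, gauss_eq_zero (.inl (show (-1 : ℤ) < 0 by omega))]
  rcases lt_or_ge (n : ℤ) m with hnm | hmn
  · obtain rfl | hnm' : m = n + 1 ∨ (n : ℤ) + 1 < m := by omega
    · simpa [gauss_eq_zero, gauss_self hqp n] using gauss_self hqp (n + 1)
    · simp [gauss_eq_zero, hnm, hnm', gauss_eq_zero (.inr (show (n : ℤ) < m - 1 by omega))]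
  obtain ⟨a, b, rfl, rfl⟩ : ∃ a b : ℕ, m = a + 1 ∧ n = a + 1 + b :=
    ⟨(m - 1).toNat, n - m.toNat, by omega, by omega⟩
  have h₁ : gauss q (a + 1 + b + 1) (a + 1)
      = qp q q (a + b + 2) / (qp q q (a + 1) * qp q q (b + 1)) := by
    convert gauss_add (q := q) (a + 1) (b + 1) using 2 <;> push_cast <;> ring_nf
  have h₂ : gauss q (a + 1 + b) (a + 1) = qp q q (a + b + 1) / (qp q q (a + 1) * qp q q b) := by
    convert gauss_add (q := q) (a + 1) b using 2 <;> push_cast <;> ring_nf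
  have h₃ : gauss q (a + 1 + b) (a + 1 - 1)
      = qp q q (a + b + 1) / (qp q q a * qp q q (b + 1)) := by
    convert gauss_add (q := q) a (b + 1) using 2 <;> ring_nf
  have h₄ : q ^ (((a + 1 + b : ℕ) : ℤ) + 1 - (a + 1)) = q ^ (b + 1) := by
    rw [← zpow_natCast]; push_cast; ring_nf
  rw [h₁, h₂, h₃, h₄, qp_succ q q (a + b + 1), qp_succ q q a, qp_succ q q b,
    pow_succ q (a + b), pow_add, pow_succ q b]
  have := hqp a
  have := hqp b
  have := hqp (a + b + 1)
  have := one_sub_pow_mul_self_ne_zero hqp a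
  have := one_sub_pow_mul_self_ne_zero hqp b
  field_simp
  ring

lemma gauss_succ' (n : ℕ) (m : ℤ) :
    gauss q (n + 1) m = q ^ m * gauss q n m + gauss q n (m - 1) := by
  have h := gauss_succ hqp n (n + 1 - m)
  rw [← gauss_symm (n + 1) m, Nat.cast_succ, h, add_comm, ← gauss_symm n m,
    ← gauss_symm n (m - 1)]
  ring_nf
end

noncomputable def rrSum (q : ℂ) (N : ℕ) : ℂ := ∑' j : ℕ, q ^ (j ^ 2) * gauss q (N - j) j

lemma summable_rrSum (q : ℂ) (N : ℕ) :
    Summable fun j : ℕ ↦ q ^ (j ^ 2) * gauss q (N - j) j :=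
  summable_of_ne_finset_zero (s := Finset.range (N + 1)) fun j hj ↦ by
    rw [Finset.mem_range] at hj
    rw [gauss_eq_zero (by omega), mul_zero]

lemma rrSum_of_le_one (hqp : ∀ k : ℕ, qp q q k ≠ 0) {N : ℕ} (hN : N ≤ 1) :
    rrSum q N = 1 := by
  rw [rrSum, tsum_eq_single 0 fun j hj ↦ by rw [gauss_eq_zero (by omega), mul_zero]]
  simp [gauss_zero_right hqp]

lemma rrSum_succ_succ (hq : q ≠ 0) (hqp : ∀ k : ℕ, qp q q k ≠ 0) (N : ℕ) :
    rrSum q (N + 2) = rrSum q (N + 1) + q ^ (N + 1) * rrSum q N := by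
  set g : ℕ → ℂ := fun j ↦
    q ^ (j ^ 2) * q ^ ((N : ℤ) + 2 - 2 * j) * gauss q (N + 1 - j) (j - 1)
  have hsplit : ∀ j : ℕ, q ^ (j ^ 2) * gauss q (N + 2 - j) j
      = q ^ (j ^ 2) * gauss q (N + 1 - j) j + g j := by
    intro j
    rcases le_or_gt j (N + 1) with hj | hj
    · rw [show N + 2 - j = N + 1 - j + 1 by omega, gauss_succ hqp,
        show ((N + 1 - j : ℕ) : ℤ) + 1 - j = N + 2 - 2 * j by omega]
      ring
    · simp only [g, gauss_eq_zero (show (j : ℤ) < 0 ∨ ((N + 2 - j : ℕ) : ℤ) < j by omega),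
        gauss_eq_zero (show (j : ℤ) < 0 ∨ ((N + 1 - j : ℕ) : ℤ) < j by omega),
        gauss_eq_zero (show (j : ℤ) - 1 < 0 ∨ ((N + 1 - j : ℕ) : ℤ) < j - 1 by omega)]
      ring
  have hg : Summable g := by
    simpa [hsplit] using (summable_rrSum q (N + 2)).sub (summable_rrSum q (N + 1))
  have hg_succ : ∀ i : ℕ, g (i + 1) = q ^ (N + 1) * (q ^ (i ^ 2) * gauss q (N - i) i) := by
    intro i
    have hpow : q ^ ((i + 1) ^ 2) * q ^ ((N : ℤ) + 2 - 2 * (i + 1 : ℕ))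
        = q ^ (N + 1) * q ^ (i ^ 2) := by
      simp only [← zpow_natCast, ← zpow_add₀ hq]
      push_cast
      ring_nf
    simp only [g]
    rw [hpow, Nat.add_sub_add_right, Nat.cast_succ, add_sub_cancel_right, mul_assoc]
  rw [rrSum, tsum_congr hsplit, (summable_rrSum q (N + 1)).tsum_add hg, hg.tsum_eq_zero_add,
    tsum_congr hg_succ, tsum_mul_left]
  simp [g, gauss_eq_zero, rrSum]

noncomputable def rrTerm (q : ℂ) (N : ℕ) (l : ℤ) : ℂ :=
  (-1 : ℂ) ^ l * q ^ (l * (5 * l + 1) / 2) * gauss q N (Int.fdiv ((N : ℤ) - 5 * l) 2)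

noncomputable def rrAltSum (q : ℂ) (N : ℕ) : ℂ := ∑' l : ℤ, rrTerm q N l

-- The even-parity case of `rrTerm_succ_succ` leaves this term over, the odd-parity case minus
-- its value at `l + 1`.
noncomputable def rrCorrection (q : ℂ) (N : ℕ) (l : ℤ) : ℂ :=
  if Even ((N : ℤ) + 2 - 5 * l) then
    (-1 : ℂ) ^ l * q ^ (l * (5 * l + 1) / 2 + ((N : ℤ) + 2 - 5 * l) / 2) *
      gauss q N (((N : ℤ) + 2 - 5 * l) / 2)
  else 0

lemma rrTerm_succ_succ (hq : q ≠ 0) (hqp : ∀ k : ℕ, qp q q k ≠ 0) (N : ℕ) (l : ℤ) :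
    rrTerm q (N + 2) l = rrTerm q (N + 1) l + q ^ (N + 1) * rrTerm q N l +
      (rrCorrection q N l - rrCorrection q N (l + 1)) := by
  have hfdiv (a : ℤ) : Int.fdiv a 2 = a / 2 := Int.fdiv_eq_ediv_of_nonneg a zero_le_two
  simp only [rrTerm, rrCorrection, hfdiv, ← zpow_natCast q (N + 1)]
  push_cast
  set s : ℂ := (-1) ^ l
  set E : ℂ := q ^ (l * (5 * l + 1) / 2)
  rcases Int.even_or_odd ((N : ℤ) + 2 - 5 * l) with ⟨m, hm⟩ | ⟨m, hm⟩
  · rw [if_pos ⟨m, hm⟩, if_neg (by rw [Int.not_even_iff_odd]; exact ⟨m - 3, by omega⟩),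
      show ((N : ℤ) + 2 - 5 * l) / 2 = m by omega,
      show ((N : ℤ) + 1 - 5 * l) / 2 = m - 1 by omega,
      show ((N : ℤ) - 5 * l) / 2 = m - 1 by omega]
    have g₂ := gauss_succ' hqp (N + 1) m
    have g₁ := gauss_succ hqp N m
    have hx : q ^ (l * (5 * l + 1) / 2 + m) = E * q ^ m := zpow_add₀ hq _ _
    have hy : q ^ m * q ^ ((N : ℤ) + 1 - m) = q ^ ((N : ℤ) + 1) := by
      rw [← zpow_add₀ hq]; ring_nf
    linear_combination s * E * g₂ + s * E * q ^ m * g₁ - s * gauss q N m * hx +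
      s * E * gauss q N (m - 1) * hy
  · have he : (l + 1) * (5 * (l + 1) + 1) / 2 = l * (5 * l + 1) / 2 + (5 * l + 3) := by
      rw [show (l + 1) * (5 * (l + 1) + 1) = l * (5 * l + 1) + 2 * (5 * l + 3) by ring,
        Int.add_mul_ediv_left _ _ two_ne_zero]
    rw [if_neg (by rw [Int.not_even_iff_odd]; exact ⟨m, hm⟩), if_pos ⟨m - 2, by omega⟩, he,
      show ((N : ℤ) + 2 - 5 * (l + 1)) / 2 = m - 2 by omega,
      show ((N : ℤ) + 2 - 5 * l) / 2 = m by omega, show ((N : ℤ) + 1 - 5 * l) / 2 = m by omega,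
      show ((N : ℤ) - 5 * l) / 2 = m - 1 by omega]
    have g₁ := gauss_succ hqp (N + 1) m
    have g₂ := gauss_succ' hqp N (m - 1)
    have hs : (-1 : ℂ) ^ (l + 1) = -s := by rw [zpow_add_one₀ (by norm_num)]; ring
    have hx : q ^ (l * (5 * l + 1) / 2 + (5 * l + 3) + (m - 2))
        = E * q ^ ((N : ℤ) + 2 - m) := by
      rw [← zpow_add₀ hq]; congr 1; omega
    have hy : q ^ ((N : ℤ) + 2 - m) * q ^ (m - 1) = q ^ ((N : ℤ) + 1) := by
      rw [← zpow_add₀ hq]; ring_nf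
    rw [Nat.cast_succ, show (N : ℤ) + 1 + 1 - m = N + 2 - m by ring] at g₁
    rw [show m - 1 - 1 = m - 2 by ring] at g₂
    rw [hs, hx]
    linear_combination s * E * g₁ + s * E * q ^ ((N : ℤ) + 2 - m) * g₂ +
      s * E * gauss q N (m - 1) * hy

lemma tsum_sub_add_one {G : Type*} [AddCommGroup G] [TopologicalSpace G]
    [IsTopologicalAddGroup G] [T2Space G] {f : ℤ → G} (hf : Summable f) :
    ∑' l, (f l - f (l + 1)) = 0 := by
  have hf' : Summable fun l ↦ f (l + 1) := (Equiv.addRight 1).summable_iff.mpr hf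
  exact (hf.tsum_sub hf').trans (sub_eq_zero.mpr ((Equiv.addRight (1 : ℤ)).tsum_eq f).symm)

lemma summable_rrTerm (q : ℂ) (N : ℕ) : Summable (rrTerm q N) :=
  summable_of_ne_finset_zero (s := Finset.Icc (-N : ℤ) N) fun l hl ↦ by
    rw [Finset.mem_Icc] at hl
    rw [rrTerm, Int.fdiv_eq_ediv_of_nonneg _ zero_le_two, gauss_eq_zero (by omega), mul_zero]

lemma summable_rrCorrection (q : ℂ) (N : ℕ) : Summable (rrCorrection q N) :=
  summable_of_ne_finset_zero (s := Finset.Icc (-(N + 2) : ℤ) (N + 2)) fun l hl ↦ by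
    rw [Finset.mem_Icc] at hl
    rw [rrCorrection, gauss_eq_zero (by omega), mul_zero, ite_self]

lemma rrAltSum_of_le_one (hqp : ∀ k : ℕ, qp q q k ≠ 0) {N : ℕ} (hN : N ≤ 1) :
    rrAltSum q N = 1 := by
  rw [rrAltSum, tsum_eq_single 0 fun l hl ↦ by
    rw [rrTerm, Int.fdiv_eq_ediv_of_nonneg _ zero_le_two, gauss_eq_zero (by omega), mul_zero]]
  rw [rrTerm, Int.fdiv_eq_ediv_of_nonneg _ zero_le_two, show ((N : ℤ) - 5 * 0) / 2 = 0 by omega]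
  simp [gauss_zero_right hqp]

lemma rrAltSum_succ_succ (hq : q ≠ 0) (hqp : ∀ k : ℕ, qp q q k ≠ 0) (N : ℕ) :
    rrAltSum q (N + 2) = rrAltSum q (N + 1) + q ^ (N + 1) * rrAltSum q N := by
  have hZ := summable_rrCorrection q N
  have hZ' : Summable fun l ↦ rrCorrection q N (l + 1) :=
    hZ.comp_injective (add_left_injective 1)
  rw [rrAltSum, tsum_congr (rrTerm_succ_succ hq hqp N),
    ((summable_rrTerm q (N + 1)).add ((summable_rrTerm q N).mul_left _)).tsum_add
      (hZ.sub hZ'),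
    tsum_sub_add_one hZ, add_zero, (summable_rrTerm q (N + 1)).tsum_add
      ((summable_rrTerm q N).mul_left _), tsum_mul_left, rrAltSum, rrAltSum]

/-- Schur's finite Rogers-Ramanujan identity (Andrews 4.1). -/
theorem schur_finite_RR_first (q : ℂ) (hq : q ≠ 0) (hqp : ∀ k : ℕ, qp q q k ≠ 0) (N : ℕ) :
    ∑' j : ℕ, q ^ (j ^ 2) * gauss q (N - j) (j : ℤ)
      = ∑' l : ℤ, (-1 : ℂ) ^ l * q ^ (l * (5 * l + 1) / 2) *
          gauss q N (Int.fdiv ((N : ℤ) - 5 * l) 2) := by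
  change rrSum q N = rrAltSum q N
  induction N using Nat.twoStepInduction with
  | zero => rw [rrSum_of_le_one hqp zero_le_one, rrAltSum_of_le_one hqp zero_le_one]
  | one => rw [rrSum_of_le_one hqp le_rfl, rrAltSum_of_le_one hqp le_rfl]
  | more N ih₀ ih₁ =>
    rw [rrSum_succ_succ hq hqp, rrAltSum_succ_succ hq hqp, ih₀, ih₁]
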